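/- arXiv:2409.16713 — 2 statements merged into one kernel-verified Lean document; each statement's English description precedes it below -/
import Mathlib

section
/- Let (M, δ) be a metric space, and let Γ be a uniform coincidence constraint that contains the zero profile and is closed under pointwise addition. Let D : C → M be a database. Then for every repair E₀ of D there exists a repair E of D such that every value used by E is a value of D (i.e., E(C) ⊆ D(C)) and κ(D, E, δ) ≤ 2·κ(D, E₀, δ). In particular, if any repair exists, there exists a 2-optimal repair using only values of D. -/
/-!
Replace every value `v` used by `E₀` by the value `D c'` of a cell `c'` that `E₀` maps to `v`
and whose `D`-value is nearest to `v`. For a cell `c` with `E₀ c = v` the triangle inequality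
gives `dist (D c) (D c') ≤ dist (D c) v + dist v (D c') ≤ 2 * dist (D c) v`. The new repair
merges whole classes of cells with equal `E₀`-value, so each of its coincidence profiles is a
finite sum of profiles of `E₀`, and these stay in `Γ` because `Γ` is an additive submonoid.
-/

open Finset

section Profile

variable {C A M N : Type*}

/-- The profile `p_E(v)`. -/
noncomputable def coincidenceProfile (lab : C → A) (E : C → M) (v : M) : A → ℕ :=
  fun a => {c : C | lab c = a ∧ E c = v}.ncard

theorem coincidenceProfile_comp [Fintype C] [DecidableEq M] [DecidableEq N]
    (lab : C → A) (E : C → M) (f : M → N) (u : N) :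
    coincidenceProfile lab (f ∘ E) u =
      ∑ v ∈ (univ.image E).filter (f · = u), coincidenceProfile lab E v := by
  classical
  ext a
  simp_rw [Finset.sum_apply, coincidenceProfile, Function.comp_apply, ← coe_filter_univ,
    Set.ncard_coe_finset]
  rw [card_eq_sum_card_fiberwise (f := E) (t := (univ.image E).filter (f · = u))]
  · refine sum_congr rfl fun v hv => congrArg card ?_
    have hfv : f v = u := (mem_filter.mp hv).2
    ext c
    simp only [mem_filter, mem_univ, true_and]
    exact ⟨fun ⟨⟨ha, _⟩, hc⟩ => ⟨ha, hc⟩, fun ⟨ha, hc⟩ => ⟨⟨ha, hc ▸ hfv⟩, hc⟩⟩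
  · intro c hc
    simp only [coe_filter, mem_univ, true_and, Set.mem_ofPred_eq] at hc ⊢
    exact ⟨mem_image_of_mem E (mem_univ c), hc.2⟩

theorem coincidenceProfile_comp_mem [Fintype C] (S : AddSubmonoid (A → ℕ))
    (lab : C → A) {E : C → M} (hE : ∀ v, coincidenceProfile lab E v ∈ S) (f : M → N) (u : N) :
    coincidenceProfile lab (f ∘ E) u ∈ S := by
  classical
  rw [coincidenceProfile_comp]
  exact S.sum_mem fun v _ => hE v

end Profile

section Nearest

variable {C M : Type*} [PseudoMetricSpace M]

theorem exists_nearest_in_fiber [Finite C] (D E : C → M) :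
    ∃ f : M → M, ∀ c, ∃ c', E c' = E c ∧ f (E c) = D c' ∧
      dist (D c') (E c) ≤ dist (D c) (E c) := by
  have hnear : ∀ v : M, ∃ m : M, ∀ c, E c = v →
      ∃ c', E c' = v ∧ m = D c' ∧ dist (D c') v ≤ dist (D c) v := by
    intro v
    by_cases hv : ∃ c, E c = v
    · obtain ⟨c', hc', hmin⟩ := Set.exists_min_image {c | E c = v} (fun c => dist (D c) v)
        (Set.toFinite _) hv
      exact ⟨D c', fun c hc => ⟨c', hc', rfl, hmin c hc⟩⟩
    · exact ⟨v, fun c hc => (hv ⟨c, hc⟩).elim⟩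
  choose f hf using hnear
  exact ⟨f, fun c => hf (E c) c rfl⟩

theorem dist_le_two_mul_of_dist_le {x y v : M} (h : dist y v ≤ dist x v) :
    dist x y ≤ 2 * dist x v :=
  calc dist x y ≤ dist x v + dist y v := dist_triangle_right x y v
    _ ≤ 2 * dist x v := by linarith

end Nearest

/-- In a metric space `(M, dist)`, for a uniform coincidence constraint `Γ` containing
the zero profile and closed under pointwise addition, every repair `E₀` of a database
`D : C → M` gives rise to a repair `E` that uses only values of `D` and whose cost is
at most twice the cost of `E₀`. -/
theorem stmt_2 {C A M : Type*} [Fintype C] [MetricSpace M]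
    (lab : C → A) (w : A → ℝ) (hw : ∀ a, 0 ≤ w a)
    (Γ : Set (A → ℕ))
    (hzero : (fun _ => 0) ∈ Γ)
    (hadd : ∀ p q : A → ℕ, p ∈ Γ → q ∈ Γ → (fun a => p a + q a) ∈ Γ)
    (D : C → M) (E₀ : C → M)
    (hE₀ : ∀ v : M, (fun a => {c : C | lab c = a ∧ E₀ c = v}.ncard) ∈ Γ) :
    ∃ E : C → M,
      (∀ v : M, (fun a => {c : C | lab c = a ∧ E c = v}.ncard) ∈ Γ) ∧
      (∀ c : C, ∃ c' : C, E c = D c') ∧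
      ∑ c : C, w (lab c) * dist (D c) (E c) ≤
        2 * ∑ c : C, w (lab c) * dist (D c) (E₀ c) := by
  let S : AddSubmonoid (A → ℕ) := ⟨⟨Γ, fun {p q} => hadd p q⟩, hzero⟩
  obtain ⟨f, hf⟩ := exists_nearest_in_fiber D E₀
  refine ⟨f ∘ E₀, coincidenceProfile_comp_mem S lab hE₀ f, fun c => ?_, ?_⟩
  · obtain ⟨c', -, hc', -⟩ := hf c
    exact ⟨c', hc'⟩
  · rw [mul_sum]
    refine sum_le_sum fun c _ => ?_
    obtain ⟨c', -, hc', hnear⟩ := hf c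
    rw [Function.comp_apply, hc', mul_left_comm]
    exact mul_le_mul_of_nonneg_left (dist_le_two_mul_of_dist_le hnear) (hw _)
end

section
/- Let D : C → ℝ be a database over the reals with distance δ(x, y) = |x − y|, Γ a coincidence constraint over ℝ, w : A → ℝ nonnegative weights, and τ ≥ 0. For every (δ≤τ)-repair E of D there exists a (δ≤τ)-repair E# of D such that: (i) for every attribute a ∈ A, the multiset of values {E#(c) : λ(c) = a} equals the multiset {E(c) : λ(c) = a} (hence E# has the same coincidence profiles as E and satisfies Γ); (ii) κ(D, E#, δ) ≤ κ(D, E, δ); and (iii) E# is order-preserving on each label class: for all cells c, c' with λ(c) = λ(c') and D(c) < D(c'), it holds that E#(c) ≤ E#(c'). -/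
/-!
Among the rearrangements `E ∘ σ` of `E` by label-preserving permutations `σ` that stay within
the `τ`-bound and cost no more than `E`, take one maximising the correlation `∑ D c * F c`.
If it had an inversion `D c₀ < D c₁`, `F c₁ < F c₀` inside a label class, exchanging the two
values would raise the correlation strictly, while on the line such an exchange can only lower
both the largest and the total distance to `D`. A label-preserving rearrangement has the same
multisets of values per attribute, hence the same coincidence profiles.
-/

open Equiv Finset

section Exchange

theorem abs_sub_add_abs_sub_le_of_le_of_le {a b x y : ℝ} (hab : a ≤ b) (hyx : y ≤ x) :
    |a - y| + |b - x| ≤ |a - x| + |b - y| := by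
  rcases abs_cases (a - y) with ⟨h1, h1'⟩ | ⟨h1, h1'⟩ <;>
  rcases abs_cases (b - x) with ⟨h2, h2'⟩ | ⟨h2, h2'⟩ <;>
  rcases abs_cases (a - x) with ⟨h3, h3'⟩ | ⟨h3, h3'⟩ <;>
  rcases abs_cases (b - y) with ⟨h4, h4'⟩ | ⟨h4, h4'⟩ <;> linarith

theorem abs_sub_le_and_abs_sub_le_of_le_of_le {a b x y B : ℝ} (hab : a ≤ b) (hyx : y ≤ x)
    (hx : |a - x| ≤ B) (hy : |b - y| ≤ B) : |a - y| ≤ B ∧ |b - x| ≤ B := by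
  simp only [abs_le] at *
  exact ⟨⟨by linarith, by linarith⟩, by linarith, by linarith⟩

theorem sum_comp_swap_sub_sum {C α M : Type*} [Fintype C] [DecidableEq C] [AddCommGroup M]
    {i j : C} (hij : i ≠ j) (φ : C → α → M) (F : C → α) :
    ∑ c, φ c (F (swap i j c)) - ∑ c, φ c (F c) =
      φ i (F j) + φ j (F i) - (φ i (F i) + φ j (F j)) := by
  rw [← Finset.sum_sub_distrib, Fintype.sum_eq_add i j hij fun c hc => by
    rw [swap_apply_of_ne_of_ne hc.1 hc.2, sub_self], swap_apply_left, swap_apply_right]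
  abel

end Exchange

section LabelPreserving

variable {C A α : Type*} {lab : C → A} {σ : Perm C}

theorem map_filter_lab_comp_perm [Fintype C] [DecidableEq A] (hσ : ∀ c, lab (σ c) = lab c)
    (E : C → α) (a : A) :
    (univ.filter fun c => lab c = a).val.map (E ∘ σ) =
      (univ.filter fun c => lab c = a).val.map E := by
  have hinv : (univ.filter fun c => lab c = a).map σ.toEmbedding =
      univ.filter fun c => lab c = a := by
    ext c
    simp only [mem_map_equiv, mem_filter, mem_univ, true_and]
    rw [← hσ (σ.symm c), apply_symm_apply]
  rw [← Multiset.map_map]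
  conv_rhs => rw [← hinv]
  rfl

theorem ncard_lab_eq_and_comp_perm (hσ : ∀ c, lab (σ c) = lab c) (E : C → α) (a : A)
    (v : α) : {c | lab c = a ∧ E (σ c) = v}.ncard = {c | lab c = a ∧ E c = v}.ncard := by
  have : {c | lab c = a ∧ E (σ c) = v} = σ ⁻¹' {c | lab c = a ∧ E c = v} := by
    ext c
    simp [hσ]
  rw [this, Set.ncard_preimage_of_injective_subset_range σ.injective (by simp)]

end LabelPreserving

section Rearrangement

variable {C A : Type*} [Fintype C] [DecidableEq C] (lab : C → A) (w : A → ℝ) (D : C → ℝ)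

def repairCost (F : C → ℝ) : ℝ := ∑ c, w (lab c) * |D c - F c|

variable {lab w D} {c₀ c₁ : C}

theorem repairCost_comp_swap_le (hw : ∀ a, 0 ≤ w a) (hl : lab c₀ = lab c₁)
    (hD : D c₀ < D c₁) {F : C → ℝ} (hF : F c₁ ≤ F c₀) :
    repairCost lab w D (F ∘ swap c₀ c₁) ≤ repairCost lab w D F := by
  have hne : c₀ ≠ c₁ := fun h => hD.ne (congrArg D h)
  have hexch := sum_comp_swap_sub_sum hne (fun c x => w (lab c) * |D c - x|) F
  have hcross := abs_sub_add_abs_sub_le_of_le_of_le hD.le hF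
  rw [← hl] at hexch
  simp only [repairCost, Function.comp_apply]
  nlinarith [mul_le_mul_of_nonneg_left hcross (hw (lab c₀))]

theorem sum_mul_lt_sum_mul_comp_swap (hD : D c₀ < D c₁) {F : C → ℝ} (hF : F c₁ < F c₀) :
    ∑ c, D c * F c < ∑ c, D c * (F ∘ swap c₀ c₁) c := by
  have hexch := sum_comp_swap_sub_sum (fun h => hD.ne (congrArg D h)) (fun c x => D c * x) F
  simp only [Function.comp_apply]
  nlinarith [mul_pos (sub_pos.2 hD) (sub_pos.2 hF)]

theorem exists_perm_monotone_on_labels (hw : ∀ a, 0 ≤ w a) (τ : ℝ) (E : C → ℝ)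
    (hEτ : ∀ c, |D c - E c| ≤ w (lab c) * τ) :
    ∃ σ : Perm C, (∀ c, lab (σ c) = lab c) ∧ (∀ c, |D c - E (σ c)| ≤ w (lab c) * τ) ∧
      repairCost lab w D (E ∘ σ) ≤ repairCost lab w D E ∧
      ∀ c c', lab c = lab c' → D c < D c' → E (σ c) ≤ E (σ c') := by
  classical
  set admissible : Finset (Perm C) := univ.filter fun σ =>
    (∀ c, lab (σ c) = lab c) ∧ (∀ c, |D c - E (σ c)| ≤ w (lab c) * τ) ∧
      repairCost lab w D (E ∘ σ) ≤ repairCost lab w D E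
  have h1 : 1 ∈ admissible := by simpa [admissible] using hEτ
  obtain ⟨σ, hσ, hmax⟩ := admissible.exists_max_image (fun σ => ∑ c, D c * E (σ c)) ⟨1, h1⟩
  obtain ⟨hσlab, hστ, hσcost⟩ := (mem_filter.1 hσ).2
  refine ⟨σ, hσlab, hστ, hσcost, fun c₀ c₁ hl hD => ?_⟩
  by_contra! hinv
  have hswap : ∀ c, (σ * swap c₀ c₁) c = σ (swap c₀ c₁ c) := fun _ => rfl
  have hτswap := abs_sub_le_and_abs_sub_le_of_le_of_le hD.le hinv.le (hστ c₀)
    (hl ▸ hστ c₁)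
  have hmem : σ * swap c₀ c₁ ∈ admissible := by
    refine mem_filter.2 ⟨mem_univ _, fun c => ?_, fun c => ?_, ?_⟩
    · rw [hswap, hσlab, swap_apply_def]
      split_ifs <;> simp_all
    · rw [hswap, swap_apply_def]
      split_ifs with h0 h1
      · exact h0 ▸ hτswap.1
      · exact h1 ▸ hl ▸ hτswap.2
      · exact hστ c
    · exact (repairCost_comp_swap_le (F := E ∘ σ) hw hl hD hinv.le).trans hσcost
  exact (hmax _ hmem).not_gt (sum_mul_lt_sum_mul_comp_swap (F := E ∘ σ) hD hinv)

end Rearrangement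

open Classical in
theorem stmt_8_general {C A : Type*} [Fintype C]
    (lab : C → A) (w : A → ℝ) (hw : ∀ a, 0 ≤ w a)
    (Γ : ℝ → Set (A → ℕ)) (τ : ℝ)
    (D : C → ℝ) (E : C → ℝ)
    (hEΓ : ∀ v : ℝ, (fun a => {c : C | lab c = a ∧ E c = v}.ncard) ∈ Γ v)
    (hEτ : ∀ c, |D c - E c| ≤ w (lab c) * τ) :
    ∃ E' : C → ℝ,
      (∀ v : ℝ, (fun a => {c : C | lab c = a ∧ E' c = v}.ncard) ∈ Γ v) ∧
      (∀ c, |D c - E' c| ≤ w (lab c) * τ) ∧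
      (∀ a : A, (Finset.univ.filter fun c : C => lab c = a).val.map E' =
        (Finset.univ.filter fun c : C => lab c = a).val.map E) ∧
      (∑ c : C, w (lab c) * |D c - E' c| ≤ ∑ c : C, w (lab c) * |D c - E c|) ∧
      (∀ c c' : C, lab c = lab c' → D c < D c' → E' c ≤ E' c') := by
  obtain ⟨σ, hσlab, hστ, hσcost, hσmono⟩ := exists_perm_monotone_on_labels hw τ E hEτ
  refine ⟨E ∘ σ, fun v => ?_, hστ, map_filter_lab_comp_perm hσlab E, hσcost, hσmono⟩
  simpa only [Function.comp_apply, ncard_lab_eq_and_comp_perm hσlab] using hEΓ v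

open Classical in
/-- On the line, every `(δ≤τ)`-repair `E` of `D : C → ℝ` can be turned into a
`(δ≤τ)`-repair `E'` that uses, per attribute, the same multiset of values as `E`,
has cost at most that of `E`, and is order-preserving on each label class. -/
theorem stmt_8 {C A : Type*} [Fintype C]
    (lab : C → A) (w : A → ℝ) (hw : ∀ a, 0 ≤ w a)
    (Γ : ℝ → Set (A → ℕ)) (τ : ℝ) (hτ : 0 ≤ τ)
    (D : C → ℝ) (E : C → ℝ)
    (hEΓ : ∀ v : ℝ, (fun a => {c : C | lab c = a ∧ E c = v}.ncard) ∈ Γ v)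
    (hEτ : ∀ c, |D c - E c| ≤ w (lab c) * τ) :
    ∃ E' : C → ℝ,
      (∀ v : ℝ, (fun a => {c : C | lab c = a ∧ E' c = v}.ncard) ∈ Γ v) ∧
      (∀ c, |D c - E' c| ≤ w (lab c) * τ) ∧
      (∀ a : A, (Finset.univ.filter fun c : C => lab c = a).val.map E' =
        (Finset.univ.filter fun c : C => lab c = a).val.map E) ∧
      (∑ c : C, w (lab c) * |D c - E' c| ≤ ∑ c : C, w (lab c) * |D c - E c|) ∧
      (∀ c c' : C, lab c = lab c' → D c < D c' → E' c ≤ E' c') :=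
  stmt_8_general lab w hw Γ τ D E hEΓ hEτ
end
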